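/- Let T > 0 and α ∈ (0,1). There exist constants C = C(α,m,n,T) > 0 and m₀ = m₀(α,m,n) > 0 such that for every function u ∈ C^{0,2+α}_{WF}([0,T]×S̄_{n,m}) and every ε ∈ (0,1): ‖u_t‖_{C([0,T]×S̄_{n,m})} ≤ ε ‖u‖_{C^{0,2+α}_{WF}([0,T]×S̄_{n,m})} + C ε^{−m₀} ‖u‖_{C([0,T]×S̄_{n,m})}. -/

import Mathlib

open scoped ENNReal BigOperators
open Set

noncomputable section

namespace Kimura

/-- Spatial variable space `ℝ^n × ℝ^m`. -/
abbrev Z (n m : ℕ) : Type := (Fin n → ℝ) × (Fin m → ℝ)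

/-- Time–space variable space. -/
abbrev E (n m : ℕ) : Type := ℝ × Z n m

variable {n m : ℕ}

/-- The open orthant `S_{n,m} = (0,∞)^n × ℝ^m`. -/
def Sopen (n m : ℕ) : Set (Z n m) := {z | ∀ i, 0 < z.1 i}

/-- The closed orthant `S̄_{n,m} = [0,∞)^n × ℝ^m`. -/
def Sbar (n m : ℕ) : Set (Z n m) := {z | ∀ i, 0 ≤ z.1 i}

/-- The function `F` used to define the WF distance. -/
def Fwf (s : ℝ) : ℝ := if s ≤ 1 then 2 * Real.sqrt s else s + 1

/-- The spatial WF distance `ρ₀`. -/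
def rho0 (z0 z : Z n m) : ℝ :=
  (⨆ i : Fin n, |Fwf (z0.1 i) - Fwf (z.1 i)|) + ⨆ l : Fin m, |z0.2 l - z.2 l|

/-- The parabolic WF distance `ρ`. -/
def rho (P0 P : E n m) : ℝ := rho0 P0.2 P.2 + Real.sqrt |P0.1 - P.1|

/-- The parabolic cylinder `J × D`. -/
def QT (J : Set ℝ) (D : Set (Z n m)) : Set (E n m) := J ×ˢ D

/-- Supremum norm on `J × D` (valued in `ℝ≥0∞`). -/
def supN (J : Set ℝ) (D : Set (Z n m)) (u : E n m → ℝ) : ℝ≥0∞ :=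
  ⨆ P ∈ QT J D, ENNReal.ofReal |u P|

/-- The WF Hölder seminorm of exponent `a` on `J × D`. -/
def holderSemi (a : ℝ) (J : Set ℝ) (D : Set (Z n m)) (u : E n m → ℝ) : ℝ≥0∞ :=
  ⨆ P1 ∈ QT J D, ⨆ P2 ∈ QT J D, ⨆ _ : P1 ≠ P2,
    ENNReal.ofReal (|u P1 - u P2| / rho P1 P2 ^ a)

/-- The `C^{0,α}_{WF}` norm on `J × D`. -/
def holderN (a : ℝ) (J : Set ℝ) (D : Set (Z n m)) (u : E n m → ℝ) : ℝ≥0∞ :=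
  supN J D u + holderSemi a J D u

/-- Time direction. -/
def eT (n m : ℕ) : E n m := (1, 0)

/-- `x_i` direction. -/
def eX (n m : ℕ) (i : Fin n) : E n m := (0, (Pi.single i 1, 0))

/-- `y_l` direction. -/
def eY (n m : ℕ) (l : Fin m) : E n m := (0, (0, Pi.single l 1))

/-- Partial (line) derivative along the direction `v`. -/
def dl (v : E n m) (u : E n m → ℝ) : E n m → ℝ := fun P => lineDeriv ℝ u P v

/-- Iterated partial derivative `D_t^τ D_x^{ζx} D_y^{ζy}`. -/
def multiD (τ : ℕ) (ζx : Fin n → ℕ) (ζy : Fin m → ℕ) (u : E n m → ℝ) : E n m → ℝ :=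
  (dl (eT n m))^[τ]
    (((List.ofFn fun i : Fin n => (dl (eX n m i))^[ζx i]).foldr (· ∘ ·) id)
      (((List.ofFn fun l : Fin m => (dl (eY n m l))^[ζy l]).foldr (· ∘ ·) id) u))

/-- A parabolic multi-index `(τ, ζ)`. -/
abbrev MIdx (n m : ℕ) : Type := ℕ × (Fin n → ℕ) × (Fin m → ℕ)

/-- Parabolic weight `2τ + |ζ|` of a multi-index. -/
def MIdx.wt (p : MIdx n m) : ℕ := 2 * p.1 + ((∑ i, p.2.1 i) + ∑ l, p.2.2 l)

/-- Iterated derivative associated with a multi-index. -/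
def multiDP (p : MIdx n m) (u : E n m → ℝ) : E n m → ℝ := multiD p.1 p.2.1 p.2.2 u

/-- Multi-indices of parabolic weight at most `k`. -/
def Idx (n m k : ℕ) : Type := {p : MIdx n m // MIdx.wt p ≤ k}

/-- The `C^{k,α}_{WF}` norm on `J × D`. -/
def CkN (k : ℕ) (a : ℝ) (J : Set ℝ) (D : Set (Z n m)) (u : E n m → ℝ) : ℝ≥0∞ :=
  ∑' p : Idx n m k, holderN a J D (multiDP p.1 u)

/-- The region `M_I`. -/
def MI (n m : ℕ) (I : Finset (Fin n)) : Set (Z n m) :=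
  {z | (∀ i ∈ I, z.1 i ∈ Set.Ioo (0:ℝ) 1) ∧ ∀ j ∉ I, 1 < z.1 j}

/-- The region `M'_I`. -/
def MI' (n m : ℕ) (I : Finset (Fin n)) : Set (Z n m) :=
  {z | (∀ i ∈ I, z.1 i ∈ Set.Ioo (0:ℝ) 1) ∧ ∀ j ∉ I, 1 / 2 < z.1 j}

/-- The region `M''_I`. -/
def MI'' (n m : ℕ) (I : Finset (Fin n)) : Set (Z n m) :=
  {z | (∀ i ∈ I, z.1 i ∈ Set.Ioo (0:ℝ) 2) ∧ ∀ j ∉ I, 1 / 4 < z.1 j}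

/-- The `C^{0,2+α}_{WF}` norm on a piece `D ⊆ M̄_I`. -/
def pieceN (I : Finset (Fin n)) (a : ℝ) (J : Set ℝ) (D : Set (Z n m)) (u : E n m → ℝ) :
    ℝ≥0∞ :=
  CkN 1 a J D u + holderN a J D (dl (eT n m) u)
  + (∑ i ∈ I, ∑ j ∈ I, holderN a J D
      fun P => Real.sqrt (P.2.1 i * P.2.1 j) * dl (eX n m i) (dl (eX n m j) u) P)
  + (∑ i ∈ I, ∑ j ∈ Iᶜ, holderN a J D
      fun P => Real.sqrt (P.2.1 i) * dl (eX n m i) (dl (eX n m j) u) P)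
  + (∑ i ∈ I, ∑ l : Fin m, holderN a J D
      fun P => Real.sqrt (P.2.1 i) * dl (eX n m i) (dl (eY n m l) u) P)
  + (∑ i ∈ Iᶜ, ∑ j ∈ Iᶜ, holderN a J D (dl (eX n m i) (dl (eX n m j) u)))
  + (∑ i ∈ Iᶜ, ∑ l : Fin m, holderN a J D (dl (eX n m i) (dl (eY n m l) u)))
  + ∑ l : Fin m, ∑ q : Fin m, holderN a J D (dl (eY n m l) (dl (eY n m q) u))

/-- The `C^{0,2+α}_{WF}` norm on `J × D` for an arbitrary domain `D`. -/
def C2N (a : ℝ) (J : Set ℝ) (D : Set (Z n m)) (u : E n m → ℝ) : ℝ≥0∞ :=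
  ∑ I : Finset (Fin n), pieceN I a J (D ∩ closure (MI n m I)) u

/-- The `C^{k,2+α}_{WF}` norm on `J × D`. -/
def Ck2N (k : ℕ) (a : ℝ) (J : Set ℝ) (D : Set (Z n m)) (u : E n m → ℝ) : ℝ≥0∞ :=
  ∑' p : Idx n m k, C2N a J D (multiDP p.1 u)

/-- Time-independent extension of a spatial function. -/
def timeExt (f : Z n m → ℝ) : E n m → ℝ := fun P => f P.2

/-- The elliptic `C^{k,α}_{WF}` norm on `D`. -/
def eCkN (k : ℕ) (a : ℝ) (D : Set (Z n m)) (f : Z n m → ℝ) : ℝ≥0∞ :=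
  CkN k a (Set.Icc 0 0) D (timeExt f)

/-- The elliptic `C^{k,2+α}_{WF}` norm on `D`. -/
def eCk2N (k : ℕ) (a : ℝ) (D : Set (Z n m)) (f : Z n m → ℝ) : ℝ≥0∞ :=
  Ck2N k a (Set.Icc 0 0) D (timeExt f)

/-- Supremum norm of a spatial function on `D`. -/
def supNZ (D : Set (Z n m)) (f : Z n m → ℝ) : ℝ≥0∞ := ⨆ z ∈ D, ENNReal.ofReal |f z|

/-- Membership in the space `C^{k,α}_{WF}(J × D)`. -/
def MemCk (k : ℕ) (a : ℝ) (J : Set ℝ) (D : Set (Z n m)) (u : E n m → ℝ) : Prop :=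
  CkN k a J D u ≠ ⊤ ∧ ∀ p : Idx n m k, ContinuousOn (multiDP p.1 u) (QT J D)

/-- Membership in the space `C^{k,2+α}_{WF}(J × D)`. -/
def MemCk2 (k : ℕ) (a : ℝ) (J : Set ℝ) (D : Set (Z n m)) (u : E n m → ℝ) : Prop :=
  Ck2N k a J D u ≠ ⊤
  ∧ (∀ p : Idx n m (k + 1), ContinuousOn (multiDP p.1 u) (QT J D))
  ∧ (∀ p : Idx n m k, ContinuousOn (dl (eT n m) (multiDP p.1 u)) (QT J D))
  ∧ (∀ p : Idx n m (k + 2), ContinuousOn (multiDP p.1 u) (QT J (D ∩ Sopen n m)))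

/-- Membership in the elliptic space `C^{k,α}_{WF}(D)`. -/
def MemECk (k : ℕ) (a : ℝ) (D : Set (Z n m)) (f : Z n m → ℝ) : Prop :=
  MemCk k a (Set.Icc 0 0) D (timeExt f)

/-- Membership in the elliptic space `C^{k,2+α}_{WF}(D)`. -/
def MemECk2 (k : ℕ) (a : ℝ) (D : Set (Z n m)) (f : Z n m → ℝ) : Prop :=
  MemCk2 k a (Set.Icc 0 0) D (timeExt f)

/-- Coefficients of a generalized Kimura operator. -/
structure Coeffs (n m : ℕ) where
  a : Fin n → Z n m → ℝ
  tA : Fin n → Fin n → Z n m → ℝ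
  b : Fin n → Z n m → ℝ
  c : Fin n → Fin m → Z n m → ℝ
  d : Fin m → Fin m → Z n m → ℝ
  e : Fin m → Z n m → ℝ

/-- The generalized Kimura operator `L`. -/
def Lop (co : Coeffs n m) (u : E n m → ℝ) : E n m → ℝ := fun P =>
  (∑ i, (P.2.1 i * co.a i P.2 * dl (eX n m i) (dl (eX n m i) u) P
        + co.b i P.2 * dl (eX n m i) u P))
  + (∑ i, ∑ j, P.2.1 i * P.2.1 j * co.tA i j P.2 * dl (eX n m i) (dl (eX n m j) u) P)
  + (∑ i, ∑ l, P.2.1 i * co.c i l P.2 * dl (eX n m i) (dl (eY n m l) u) P)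
  + (∑ q, ∑ l, co.d q l P.2 * dl (eY n m q) (dl (eY n m l) u) P)
  + ∑ l, co.e l P.2 * dl (eY n m l) u P

/-- Strict ellipticity (condition (1) of the Assumption). -/
def Ellipt (δ : ℝ) (co : Coeffs n m) : Prop :=
  ∀ I : Finset (Fin n), ∀ z ∈ closure (MI n m I), ∀ ξ : Fin n → ℝ, ∀ η : Fin m → ℝ,
    δ * ((∑ i, ξ i ^ 2) + ∑ l, η l ^ 2) ≤
      (∑ i ∈ I, co.a i z * ξ i ^ 2) + (∑ i ∈ Iᶜ, z.1 i * co.a i z * ξ i ^ 2)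
      + (∑ i ∈ I, ∑ j ∈ I, co.tA i j z * ξ i * ξ j)
      + (∑ i ∈ I, ∑ j ∈ Iᶜ, z.1 j * (co.tA i j z + co.tA j i z) * ξ i * ξ j)
      + (∑ i ∈ Iᶜ, ∑ j ∈ Iᶜ, z.1 i * z.1 j * co.tA i j z * ξ i * ξ j)
      + (∑ i ∈ I, ∑ l, co.c i l z * ξ i * η l)
      + (∑ i ∈ Iᶜ, ∑ l, z.1 i * co.c i l z * ξ i * η l)
      + ∑ q, ∑ l, co.d q l z * η q * η l

/-- Hölder continuity of the coefficients (condition (2) of the Assumption). -/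
def HolderBd (k : ℕ) (a K : ℝ) (co : Coeffs n m) : Prop :=
  ∀ I : Finset (Fin n),
    (∑ i ∈ I, eCkN k a (closure (MI n m I)) (co.a i))
    + (∑ i ∈ Iᶜ, eCkN k a (closure (MI n m I)) fun z => z.1 i * co.a i z)
    + (∑ i ∈ I, ∑ j ∈ I, eCkN k a (closure (MI n m I)) (co.tA i j))
    + (∑ i ∈ I, ∑ j ∈ Iᶜ,
        (eCkN k a (closure (MI n m I)) (fun z => z.1 j * co.tA i j z)
         + eCkN k a (closure (MI n m I)) fun z => z.1 j * co.tA j i z))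
    + (∑ i ∈ Iᶜ, ∑ j ∈ Iᶜ, eCkN k a (closure (MI n m I)) fun z => z.1 i * z.1 j * co.tA i j z)
    + (∑ i ∈ I, ∑ l, eCkN k a (closure (MI n m I)) (co.c i l))
    + (∑ i ∈ Iᶜ, ∑ l, eCkN k a (closure (MI n m I)) fun z => z.1 i * co.c i l z)
    + (∑ q, ∑ l, eCkN k a (closure (MI n m I)) (co.d q l))
    + (∑ i, eCkN k a (closure (MI n m I)) (co.b i))
    + (∑ l, eCkN k a (closure (MI n m I)) (co.e l))
    ≤ ENNReal.ofReal K

/-- Nonnegativity of the drift (condition (3) of the Assumption). -/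
def NonnegDrift (co : Coeffs n m) : Prop :=
  ∀ i, ∀ z ∈ Sbar n m, z.1 i = 0 → 0 ≤ co.b i z

/-- The full coefficient Assumption of order `k`, exponent `a`, constants `δ`, `K`. -/
def Assump (k : ℕ) (a δ K : ℝ) (co : Coeffs n m) : Prop :=
  Ellipt δ co ∧ HolderBd k a K co ∧ NonnegDrift co

/-- The Euclidean ball of radius `r` about `z0`, relative to `S_{n,m}`. -/
def ball (z0 : Z n m) (r : ℝ) : Set (Z n m) :=
  {z ∈ Sopen n m |
    Real.sqrt ((∑ i, (z.1 i - z0.1 i) ^ 2) + ∑ l, (z.2 l - z0.2 l) ^ 2) < r}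

/-- A function all of whose iterated derivatives are continuous and bounded on `J × D`. -/
def SmoothBdd (J : Set ℝ) (D : Set (Z n m)) (g : E n m → ℝ) : Prop :=
  ∀ p : MIdx n m,
    ContinuousOn (multiDP p g) (QT J D) ∧ ∃ M : ℝ, ∀ P ∈ QT J D, |multiDP p g P| ≤ M

/-- Bounded continuous function on a set. -/
def BCOn {X : Type*} [TopologicalSpace X] (g : X → ℝ) (D : Set X) : Prop :=
  ContinuousOn g D ∧ ∃ M : ℝ, ∀ x ∈ D, |g x| ≤ M

/-! Near every point, a time interval of length `h ≈ ε^{2/α}` contains a point where `|u_t|` is at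
most the difference quotient `2‖u‖_∞ / h` of `u` (mean value theorem); the `α`-Hölder continuity
of `u_t` in the parabolic distance `√|t - s|` moves this bound to the given point at the cost
`ε [u_t]_α`. -/

section OneVariable

open Real

/-- Where `f` is not differentiable, `deriv f` is the junk value `0`, which satisfies the bound;
so no differentiability hypothesis is needed. -/
theorem exists_abs_deriv_le_abs_sub_div {f : ℝ → ℝ} {a b : ℝ} (hab : a < b)
    (hf : ContinuousOn f (Icc a b)) : ∃ ξ ∈ Ioo a b, |deriv f ξ| ≤ |f b - f a| / (b - a) := by
  by_cases hd : ∃ ξ ∈ Ioo a b, ¬DifferentiableAt ℝ f ξ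
  · obtain ⟨ξ, hξ, hξd⟩ := hd
    refine ⟨ξ, hξ, ?_⟩
    rw [deriv_zero_of_not_differentiableAt hξd, abs_zero]
    exact div_nonneg (abs_nonneg _) (sub_nonneg.2 hab.le)
  · push Not at hd
    obtain ⟨ξ, hξ, hslope⟩ :=
      exists_deriv_eq_slope f hab hf fun x hx => (hd x hx).differentiableWithinAt
    refine ⟨ξ, hξ, ?_⟩
    rw [hslope, abs_div, abs_of_pos (sub_pos.2 hab)]

theorem abs_deriv_le_of_abs_sub_deriv_le {g : ℝ → ℝ} {T M S a h t : ℝ}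
    (hg : ContinuousOn g (Icc 0 T)) (hgM : ∀ s ∈ Icc 0 T, |g s| ≤ M)
    (hS : 0 ≤ S) (ha : 0 ≤ a)
    (hg' : ∀ s ∈ Icc 0 T, ∀ r ∈ Icc 0 T, |deriv g s - deriv g r| ≤ S * √|s - r| ^ a)
    (hh : 0 < h) (hhT : h ≤ T) (ht : t ∈ Icc 0 T) :
    |deriv g t| ≤ S * √h ^ a + 2 * M / h := by
  set c := min t (T - h)
  have hcI : Icc c (c + h) ⊆ Icc 0 T := fun x hx =>
    ⟨le_trans (le_min ht.1 (by linarith)) hx.1, hx.2.trans (by grind)⟩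
  obtain ⟨ξ, hξ, hξslope⟩ := exists_abs_deriv_le_abs_sub_div (lt_add_of_pos_right c hh)
    (hg.mono hcI)
  have hξI : ξ ∈ Icc 0 T := hcI (Ioo_subset_Icc_self hξ)
  have hdist : |t - ξ| ≤ h := abs_le.2 ⟨by grind, by grind⟩
  have hdiff : |g (c + h) - g c| ≤ 2 * M := by
    have h₁ := hgM _ (hcI (right_mem_Icc.2 (by linarith)))
    have h₂ := hgM _ (hcI (left_mem_Icc.2 (by linarith)))
    linarith [abs_sub (g (c + h)) (g c)]
  calc |deriv g t| ≤ |deriv g t - deriv g ξ| + |deriv g ξ| := by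
        linarith [abs_sub_abs_le_abs_sub (deriv g t) (deriv g ξ)]
    _ ≤ S * √h ^ a + 2 * M / h := by
      gcongr
      · exact (hg' t ht ξ hξI).trans (by gcongr)
      · exact hξslope.trans (by rw [add_sub_cancel_left]; gcongr)

theorem exists_pos_le_sqrt_rpow_le {T a ε : ℝ} (hT : 0 < T) (ha : 0 < a) (hε : ε ∈ Ioo 0 1) :
    ∃ h, 0 < h ∧ h ≤ T ∧ √h ^ a ≤ ε ∧ 2 / h ≤ (2 + 2 / T) * ε ^ (-(2 / a)) := by
  obtain ⟨hε0, hε1⟩ := hε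
  have hεpow : 0 < ε ^ (2 / a) := rpow_pos_of_pos hε0 _
  have hεinv : 1 ≤ ε ^ (-(2 / a)) :=
    one_le_rpow_of_pos_of_le_one_of_nonpos hε0 hε1.le (by have := div_pos two_pos ha; linarith)
  refine ⟨min (ε ^ (2 / a)) T, lt_min hεpow hT, min_le_right _ _, ?_, ?_⟩
  · calc √(min (ε ^ (2 / a)) T) ^ a ≤ √(ε ^ (2 / a)) ^ a := by gcongr; exact min_le_left _ _
      _ = ε := by
        rw [sqrt_eq_rpow, ← rpow_mul hεpow.le, ← rpow_mul hε0.le]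
        field_simp
        exact rpow_one ε
  · rcases min_choice (ε ^ (2 / a)) T with hmin | hmin <;> rw [hmin]
    · rw [rpow_neg hε0.le, div_eq_mul_inv]
      nlinarith [div_pos two_pos hT, inv_pos.2 hεpow]
    · nlinarith [div_pos two_pos hT]

end OneVariable

theorem multiDP_zero (u : E n m → ℝ) : multiDP (0 : MIdx n m) u = u := by
  have hid (k : ℕ) :
      (List.replicate k (id : (E n m → ℝ) → E n m → ℝ)).foldr (· ∘ ·) id = id := by
    induction k with
    | zero => rfl
    | succ k ih => simp [List.replicate_succ, ih]
  simp only [multiDP, multiD, Prod.fst_zero, Prod.snd_zero, Pi.zero_apply,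
    Function.iterate_zero, List.ofFn_const, hid, id]

theorem dl_eT_apply (u : E n m → ℝ) (s : ℝ) (z : Z n m) :
    dl (eT n m) u (s, z) = deriv (fun σ => u (σ, z)) s := by
  have h : (fun τ : ℝ => u ((s, z) + τ • eT n m)) = fun τ => u (s + τ, z) := by
    funext τ
    simp [eT]
  rw [dl, lineDeriv, h]
  simpa using deriv_comp_const_add (fun σ => u (σ, z)) s 0

theorem rho_mk_same (t s : ℝ) (z : Z n m) : rho ((t, z) : E n m) (s, z) = √|t - s| := by
  simp [rho, rho0, Real.iSup_const_zero]

theorem closure_MI (I : Finset (Fin n)) :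
    closure (MI n m I) = (univ.pi fun i => if i ∈ I then Icc 0 1 else Ici 1) ×ˢ univ := by
  have hMI : MI n m I = (univ.pi fun i => if i ∈ I then Ioo 0 1 else Ioi 1) ×ˢ univ := by
    ext z
    simp only [MI, mem_ofPred_eq, mem_prod, mem_pi, mem_univ, forall_const, and_true]
    grind
  rw [hMI, closure_prod_eq, closure_univ, closure_pi_set]
  congr! 3 with i
  split_ifs
  exacts [closure_Ioo zero_ne_one, closure_Ioi 1]

theorem mem_closure_MI_filter {z : Z n m} (hz : z ∈ Sbar n m) :
    z ∈ closure (MI n m {i | z.1 i ≤ 1}) := by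
  rw [closure_MI]
  refine ⟨fun i _ => ?_, mem_univ _⟩
  by_cases hi : z.1 i ≤ 1 <;> simp [hi, hz i]
  exact (not_le.1 hi).le

theorem abs_le_toReal_supN {J : Set ℝ} {D : Set (Z n m)} {u : E n m → ℝ}
    (hu : supN J D u ≠ ⊤) {P : E n m} (hP : P ∈ QT J D) : |u P| ≤ (supN J D u).toReal :=
  (ENNReal.ofReal_le_iff_le_toReal hu).1 (le_iSup₂_of_le P hP le_rfl)

theorem abs_sub_le_holderSemi_mul {a : ℝ} {J : Set ℝ} {D : Set (Z n m)} {f : E n m → ℝ}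
    (hf : holderSemi a J D f ≠ ⊤) {z : Z n m} (hz : z ∈ D) {t s : ℝ} (ht : t ∈ J) (hs : s ∈ J) :
    |f (t, z) - f (s, z)| ≤ (holderSemi a J D f).toReal * √|t - s| ^ a := by
  rcases eq_or_ne t s with rfl | hts
  · simp only [sub_self, abs_zero]
    positivity
  have hρ : 0 < √|t - s| ^ a := Real.rpow_pos_of_pos (by simpa [sub_eq_zero]) a
  rw [← div_le_iff₀ hρ, ← ENNReal.ofReal_le_iff_le_toReal hf, ← rho_mk_same t s z]
  exact le_iSup₂_of_le ((t, z) : E n m) ⟨ht, hz⟩ <| le_iSup₂_of_le ((s, z) : E n m) ⟨hs, hz⟩ <|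
    le_iSup_of_le (by simpa using hts) le_rfl

theorem holderSemi_dl_eT_le_Ck2N (a : ℝ) (J : Set ℝ) (D : Set (Z n m)) (u : E n m → ℝ)
    (I : Finset (Fin n)) :
    holderSemi a J (D ∩ closure (MI n m I)) (dl (eT n m) u) ≤ Ck2N 0 a J D u := by
  calc holderSemi a J (D ∩ closure (MI n m I)) (dl (eT n m) u)
      ≤ pieceN I a J (D ∩ closure (MI n m I)) u := by
        rw [pieceN, holderN]
        exact le_add_right (le_add_right (le_add_right (le_add_right (le_add_right
          (le_add_right (le_add_left le_add_self))))))
    _ ≤ C2N a J D u :=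
        Finset.single_le_sum (f := fun I => pieceN I a J (D ∩ closure (MI n m I)) u)
          (fun _ _ => zero_le) (Finset.mem_univ I)
    _ ≤ Ck2N 0 a J D u := by
        rw [Ck2N]
        simpa [multiDP_zero] using ENNReal.le_tsum
          (f := fun p : Idx n m 0 => C2N a J D (multiDP p.1 u)) ⟨0, by simp [MIdx.wt]⟩

theorem continuousOn_of_memCk2 {k : ℕ} {a : ℝ} {J : Set ℝ} {D : Set (Z n m)} {u : E n m → ℝ}
    (hu : MemCk2 k a J D u) : ContinuousOn u (QT J D) := by
  simpa [multiDP_zero] using hu.2.1 ⟨0, by simp [MIdx.wt]⟩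

theorem abs_dl_eT_le_of_memCk2 {T a h : ℝ} {u : E n m → ℝ}
    (hu : MemCk2 0 a (Icc 0 T) (Sbar n m) u) (hM : supN (Icc 0 T) (Sbar n m) u ≠ ⊤)
    (ha : 0 ≤ a) (hh : 0 < h) (hhT : h ≤ T) {t : ℝ} {z : Z n m} (ht : t ∈ Icc 0 T)
    (hz : z ∈ Sbar n m) :
    |dl (eT n m) u (t, z)| ≤ (Ck2N 0 a (Icc 0 T) (Sbar n m) u).toReal * √h ^ a
      + 2 * (supN (Icc 0 T) (Sbar n m) u).toReal / h := by
  have hzI : z ∈ Sbar n m ∩ closure (MI n m {i | z.1 i ≤ 1}) := ⟨hz, mem_closure_MI_filter hz⟩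
  have hsemi := holderSemi_dl_eT_le_Ck2N a (Icc 0 T) (Sbar n m) u {i | z.1 i ≤ 1}
  have hsemi_ne := ne_top_of_le_ne_top hu.1 hsemi
  have hholder (s : ℝ) (hs : s ∈ Icc 0 T) (r : ℝ) (hr : r ∈ Icc 0 T) :
      |deriv (fun σ => u (σ, z)) s - deriv (fun σ => u (σ, z)) r|
        ≤ (Ck2N 0 a (Icc 0 T) (Sbar n m) u).toReal * √|s - r| ^ a := by
    rw [← dl_eT_apply, ← dl_eT_apply]
    exact (abs_sub_le_holderSemi_mul hsemi_ne hzI hs hr).trans <|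
      mul_le_mul_of_nonneg_right (ENNReal.toReal_mono hu.1 hsemi) (by positivity)
  rw [dl_eT_apply]
  refine abs_deriv_le_of_abs_sub_deriv_le ?_ (fun s hs => abs_le_toReal_supN hM ⟨hs, hz⟩)
    ENNReal.toReal_nonneg ha hholder hh hhT ht
  exact (continuousOn_of_memCk2 hu).comp (Continuous.prodMk_left z).continuousOn
    fun s hs => ⟨hs, hz⟩

theorem statement7_general (n m : ℕ) (T : ℝ) (hT : 0 < T)
    (a : ℝ) (ha : a ∈ Set.Ioo (0:ℝ) 1) :
    ∃ C > (0:ℝ), ∃ m₀ > (0:ℝ), ∀ u : E n m → ℝ,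
      MemCk2 0 a (Set.Icc 0 T) (Sbar n m) u → ∀ ε ∈ Set.Ioo (0:ℝ) 1,
        supN (Set.Icc 0 T) (Sbar n m) (dl (eT n m) u) ≤
          ENNReal.ofReal ε * Ck2N 0 a (Set.Icc 0 T) (Sbar n m) u
            + ENNReal.ofReal (C * ε ^ (-m₀)) * supN (Set.Icc 0 T) (Sbar n m) u := by
  refine ⟨2 + 2 / T, by positivity, 2 / a, div_pos two_pos ha.1, fun u hu ε hε => ?_⟩
  have hC : 0 < (2 + 2 / T) * ε ^ (-(2 / a)) := by have := hε.1; positivity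
  by_cases hM : supN (Icc 0 T) (Sbar n m) u = ⊤
  · rw [hM, ENNReal.mul_top (ENNReal.ofReal_pos.2 hC).ne', add_top]
    exact le_top
  obtain ⟨h, hh, hhT, hhε, hhC⟩ := exists_pos_le_sqrt_rpow_le hT ha.1 hε
  set S := (Ck2N 0 a (Icc 0 T) (Sbar n m) u).toReal
  set M := (supN (Icc 0 T) (Sbar n m) u).toReal
  refine iSup₂_le fun ⟨t, z⟩ ⟨ht, hz⟩ => ?_
  have hpt : |dl (eT n m) u (t, z)| ≤ ε * S + (2 + 2 / T) * ε ^ (-(2 / a)) * M :=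
    calc |dl (eT n m) u (t, z)| ≤ S * √h ^ a + 2 / h * M := by
          simpa [mul_div_right_comm] using abs_dl_eT_le_of_memCk2 hu hM ha.1.le hh hhT ht hz
      _ ≤ ε * S + (2 + 2 / T) * ε ^ (-(2 / a)) * M := by
          rw [mul_comm S]
          gcongr
  calc ENNReal.ofReal |dl (eT n m) u (t, z)|
      ≤ ENNReal.ofReal (ε * S) + ENNReal.ofReal ((2 + 2 / T) * ε ^ (-(2 / a)) * M) :=
        (ENNReal.ofReal_le_ofReal hpt).trans ENNReal.ofReal_add_le
    _ = _ := by
        rw [ENNReal.ofReal_mul hε.1.le, ENNReal.ofReal_mul hC.le, ENNReal.ofReal_toReal hu.1,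
          ENNReal.ofReal_toReal hM]

/-- Interpolation inequality (2.7): sup norm of `u_t`. -/
theorem statement7 (n m : ℕ) (hnm : 1 ≤ n + m) (T : ℝ) (hT : 0 < T)
    (a : ℝ) (ha : a ∈ Set.Ioo (0:ℝ) 1) :
    ∃ C > (0:ℝ), ∃ m₀ > (0:ℝ), ∀ u : E n m → ℝ,
      MemCk2 0 a (Set.Icc 0 T) (Sbar n m) u → ∀ ε ∈ Set.Ioo (0:ℝ) 1,
        supN (Set.Icc 0 T) (Sbar n m) (dl (eT n m) u) ≤
          ENNReal.ofReal ε * Ck2N 0 a (Set.Icc 0 T) (Sbar n m) u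
            + ENNReal.ofReal (C * ε ^ (-m₀)) * supN (Set.Icc 0 T) (Sbar n m) u :=
  statement7_general n m T hT a ha

end Kimura
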